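/- Let C be a triangulated category and T a contravariantly finite rigid full subcategory closed under direct summands. Suppose f : X → Y satisfies: (i) its cone factors through Σ(T^⊥), and (ii) f is a weak equivalence (both connecting morphisms in its triangle factor through T^⊥). Then for every commutative square with left vertical arrow a : T' → B (T' in T, B in T * ΣT) and right vertical arrow f, there exists a diagonal lift making both triangles commute on the nose. -/

import Mathlib

/-!
Complete `f` to a triangle `Z --g--> X --f--> Y --w--> ΣZ`. Since `g` factors through `T^⊥`,
every map from an object of `T` that is killed by `f` vanishes, so lifts from objects of `T`
are unique; this gives the upper triangle once the lower one is known. For the lower one, `v`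
lifts through `f` as soon as `v ≫ w = 0`. Every map `ΣT₁ ⟶ ΣZ` with `T₁ ∈ T` vanishes: it kills
`Σg`, so it factors through `w`, hence through `Σ(T^⊥)`, and `C(ΣT, Σ(T^⊥)) = 0`. Writing
`T₁ → T₀ → B → ΣT₁` and factoring `w` through `V ∈ T^⊥`, the map `B ⟶ Y ⟶ V` vanishes on `T₀`,
so it factors through `ΣT₁`, and therefore `v ≫ w` factors through a map `ΣT₁ ⟶ ΣZ`.
-/

open CategoryTheory CategoryTheory.Limits CategoryTheory.Pretriangulated

variable {C : Type*} [Category C] [Preadditive C] [HasZeroObject C]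
  [HasShift C ℤ] [∀ n : ℤ, Functor.Additive (CategoryTheory.shiftFunctor C n)]
  [Pretriangulated C]

/-- `f` factors through an object of the set `S`. -/
def FactorsThruSet (S : Set C) {X Y : C} (f : X ⟶ Y) : Prop :=
  ∃ U ∈ S, ∃ (a : X ⟶ U) (b : U ⟶ Y), f = a ≫ b

/-- The right perpendicular subcategory `T^⊥` of a full subcategory `T`. -/
def rperp (T : Set C) : Set C := {Z | ∀ T' ∈ T, ∀ (f : T' ⟶ Z), f = 0}

/-- The class `W` of morphisms whose connecting morphisms in any triangle factor
through `T^⊥`. -/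
def Wclass (T : Set C) {X Y : C} (f : X ⟶ Y) : Prop :=
  ∀ (Z : C) (r : Z ⟶ X) (s : Y ⟶ Z⟦(1:ℤ)⟧),
    (Triangle.mk r f s ∈ distTriang C) →
      FactorsThruSet (rperp T) r ∧ FactorsThruSet (rperp T) s

/-- A subcategory `T` is rigid if `C(T, ΣT) = 0`. -/
def IsRigid (T : Set C) : Prop :=
  ∀ T' ∈ T, ∀ T'' ∈ T, ∀ (f : T' ⟶ (T'' : C)⟦(1:ℤ)⟧), f = 0

/-- A subcategory is contravariantly finite if every object admits a right approximation. -/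
def ContravariantlyFinite (T : Set C) : Prop :=
  ∀ X : C, ∃ T₀ ∈ T, ∃ (p : T₀ ⟶ X), ∀ T' ∈ T, ∀ (u : T' ⟶ X), ∃ v : T' ⟶ T₀, v ≫ p = u

/-- The subcategory `T * ΣT` of cones of morphisms of `T`. -/
def TstarSigmaT (T : Set C) : Set C :=
  {A | ∃ T₁ ∈ T, ∃ T₀ ∈ T, ∃ (a : T₁ ⟶ (T₀ : C)) (b : (T₀ : C) ⟶ A)
    (c : A ⟶ (T₁ : C)⟦(1:ℤ)⟧), Triangle.mk a b c ∈ distTriang C}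
/-- `f` factors through the shift of an object of the set `S`. -/
def FactorsThruShiftSet (S : Set C) {X Y : C} (f : X ⟶ Y) : Prop :=
  ∃ U ∈ S, ∃ (a : X ⟶ (U⟦(1:ℤ)⟧)) (b : (U⟦(1:ℤ)⟧) ⟶ Y), f = a ≫ b

/-- A subcategory is closed under direct summands. -/
def ClosedUnderSummands (T : Set C) : Prop :=
  ∀ (X S : C) (i : X ⟶ S) (r : S ⟶ X), i ≫ r = 𝟙 X → S ∈ T → X ∈ T

section

variable {T : Set C}

omit [HasZeroObject C] [HasShift C ℤ] [∀ n : ℤ, Functor.Additive (CategoryTheory.shiftFunctor C n)]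
  [Pretriangulated C] in
lemma comp_eq_zero_of_factorsThruSet_rperp {A X Y : C} (hA : A ∈ T) {r : X ⟶ Y}
    (hr : FactorsThruSet (rperp T) r) (e : A ⟶ X) : e ≫ r = 0 := by
  obtain ⟨U, hU, r₁, r₂, rfl⟩ := hr
  rw [← Category.assoc, hU A hA (e ≫ r₁), zero_comp]

omit [HasZeroObject C] [Pretriangulated C] in
lemma comp_eq_zero_of_factorsThruShiftSet_rperp {A X Y : C} (hA : A ∈ T) {r : X ⟶ Y}
    (hr : FactorsThruShiftSet (rperp T) r) (e : A⟦(1:ℤ)⟧ ⟶ X) : e ≫ r = 0 := by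
  obtain ⟨U, hU, r₁, r₂, rfl⟩ := hr
  rw [← Category.assoc, ← (shiftFunctor C (1:ℤ)).map_preimage (e ≫ r₁),
    hU A hA ((shiftFunctor C (1:ℤ)).preimage (e ≫ r₁)), Functor.map_zero, zero_comp]

variable {Z X Y : C} {g : Z ⟶ X} {f : X ⟶ Y} {w : Y ⟶ Z⟦(1:ℤ)⟧}

lemma eq_of_comp_eq_of_distTriang (htri : Triangle.mk g f w ∈ distTriang C)
    (hg : FactorsThruSet (rperp T) g) {A : C} (hA : A ∈ T) {x y : A ⟶ X}
    (h : x ≫ f = y ≫ f) : x = y := by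
  obtain ⟨e, he⟩ : ∃ e : A ⟶ Z, x - y = e ≫ g :=
    Triangle.coyoneda_exact₂ _ htri (x - y) (by
      show (x - y) ≫ f = 0
      rw [Preadditive.sub_comp, h, sub_self])
  rw [← sub_eq_zero, he, comp_eq_zero_of_factorsThruSet_rperp hA hg]

lemma shift_hom_eq_zero_of_distTriang (htri : Triangle.mk g f w ∈ distTriang C)
    (hg : FactorsThruSet (rperp T) g) (hw : FactorsThruShiftSet (rperp T) w)
    {A : C} (hA : A ∈ T) (φ : A⟦(1:ℤ)⟧ ⟶ Z⟦(1:ℤ)⟧) : φ = 0 := by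
  obtain ⟨m, rfl⟩ : ∃ m : A⟦(1:ℤ)⟧ ⟶ Y, φ = m ≫ w := Triangle.coyoneda_exact₁ _ htri φ (by
    show φ ≫ (shiftFunctor C (1:ℤ)).map g = 0
    rw [← (shiftFunctor C (1:ℤ)).map_preimage φ, ← Functor.map_comp,
      comp_eq_zero_of_factorsThruSet_rperp hA hg, Functor.map_zero])
  exact comp_eq_zero_of_factorsThruShiftSet_rperp hA hw m

lemma comp_eq_zero_of_mem_tstarSigmaT (htri : Triangle.mk g f w ∈ distTriang C)
    (hg : FactorsThruSet (rperp T) g) (hw : FactorsThruSet (rperp T) w)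
    (hw' : FactorsThruShiftSet (rperp T) w) {B : C} (hB : B ∈ TstarSigmaT T) (v : B ⟶ Y) :
    v ≫ w = 0 := by
  obtain ⟨T₁, hT₁, T₀, hT₀, α, β, γ, htriB⟩ := hB
  obtain ⟨V, hV, s₁, s₂, rfl⟩ := hw
  obtain ⟨ψ, hψ⟩ : ∃ ψ : T₁⟦(1:ℤ)⟧ ⟶ V, v ≫ s₁ = γ ≫ ψ :=
    Triangle.yoneda_exact₃ _ htriB (v ≫ s₁) (hV T₀ hT₀ _)
  rw [← Category.assoc, hψ, Category.assoc,
    shift_hom_eq_zero_of_distTriang htri hg hw' hT₁ (ψ ≫ s₂), comp_zero]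

end

theorem trivial_fibration_rlp_I_general (T : Set C)
    {X Y : C} (f : X ⟶ Y)
    (hcone : ∀ (Z : C) (g : Z ⟶ X) (v : Y ⟶ Z⟦(1:ℤ)⟧),
      (Triangle.mk g f v ∈ distTriang C) → FactorsThruShiftSet (rperp T) v)
    (hweq : Wclass T f)
    {T' B : C} (hT' : T' ∈ T) (hB : B ∈ TstarSigmaT T)
    (a : T' ⟶ B) (u : T' ⟶ X) (v : B ⟶ Y) (hsq : u ≫ f = a ≫ v) :
    ∃ l : B ⟶ X, a ≫ l = u ∧ l ≫ f = v := by
  obtain ⟨Z, g, w, htri⟩ := distinguished_cocone_triangle₁ f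
  obtain ⟨hg, hw⟩ := hweq Z g w htri
  obtain ⟨l, hl⟩ : ∃ l : B ⟶ X, v = l ≫ f := Triangle.coyoneda_exact₃ _ htri v
    (comp_eq_zero_of_mem_tstarSigmaT htri hg hw (hcone Z g w htri) hB v)
  refine ⟨l, eq_of_comp_eq_of_distTriang htri hg hT' ?_, hl.symm⟩
  rw [Category.assoc, ← hl, hsq]

/-- If the cone of `f` factors through `Σ(T^⊥)` and `f` is a weak equivalence, then
every commutative square with left vertical arrow `a : T' ⟶ B` (`T' ∈ T`,
`B ∈ T * ΣT`) and right vertical arrow `f` admits a diagonal lift. -/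
theorem trivial_fibration_rlp_I (T : Set C)
    (hcf : ContravariantlyFinite T) (hrig : IsRigid T)
    (hsumm : ClosedUnderSummands T)
    {X Y : C} (f : X ⟶ Y)
    (hcone : ∀ (Z : C) (g : Z ⟶ X) (v : Y ⟶ Z⟦(1:ℤ)⟧),
      (Triangle.mk g f v ∈ distTriang C) → FactorsThruShiftSet (rperp T) v)
    (hweq : Wclass T f)
    {T' B : C} (hT' : T' ∈ T) (hB : B ∈ TstarSigmaT T)
    (a : T' ⟶ B) (u : T' ⟶ X) (v : B ⟶ Y) (hsq : u ≫ f = a ≫ v) :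
    ∃ l : B ⟶ X, a ≫ l = u ∧ l ≫ f = v :=
  trivial_fibration_rlp_I_general T f hcone hweq hT' hB a u v hsq
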